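/- With the setup described in the context, for a in the image of 𝒞 and i in the image of 𝒞* on the class 𝒞_a define t'_{a,i} = a + i + s_{r,a} − s_r − r ∈ Γ₀. Then for every s ∈ Γ₀, all a, b in the image of 𝒞, and all x ∈ 𝒞_a, y ∈ 𝒞_b with x ≠ y, the following identity holds in Γ₀/H': c({x, y}) + (image of s + 𝒞(x) + 𝒞(y)) = image of s + s_r + 2r + t'_{a, 𝒞*(x)} + t'_{b, 𝒞*(y)}. -/

import Mathlib

/-!
Choose `z ≠ w` in the class of `r` and a set `B` of `d - 1` further elements of that class,
avoiding `x` and `y`. Comparing the `d`-gadget condition for `B ∪ {x}` and `B ∪ {z}` at the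
two vertices `y, w` gives the exchange relation `c{x,y} + c{z,w} = c{x,w} + c{z,y}`, that is
`s_{a,b} + s_r = s_{r,a} + s_{r,b}` modulo `H'`, which is the claimed identity.
-/

open Finset

def NoGadget {X G : Type*} [AddCommMonoid G] (c : Sym2 X → G) (p : X → G) (e : ℕ) : Prop :=
  ∀ A : Finset X, A.card = e → ∀ w ∉ A, ∀ w' ∉ A,
    ∑ u ∈ A, c s(u, w) + p w = ∑ u ∈ A, c s(u, w') + p w'

namespace NoGadget

variable {X G : Type*} [AddCancelCommMonoid G] {c : Sym2 X → G} {p : X → G} {e : ℕ}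

theorem add_swap [DecidableEq X] (hg : NoGadget c p e) {B : Finset X} (hB : B.card + 1 = e)
    {x y z w : X} (hx : x ∉ B) (hy : y ∉ B) (hz : z ∉ B) (hw : w ∉ B)
    (hxy : x ≠ y) (hxw : x ≠ w) (hzy : z ≠ y) (hzw : z ≠ w) :
    c s(x, y) + c s(z, w) = c s(x, w) + c s(z, y) := by
  set Ky := ∑ u ∈ B, c s(u, y) + p y
  set Kw := ∑ u ∈ B, c s(u, w) + p w
  have insert_eq : ∀ v ∉ B, v ≠ y → v ≠ w → c s(v, y) + Ky = c s(v, w) + Kw := by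
    intro v hv hvy hvw
    have h := hg (insert v B) (by rw [card_insert_of_notMem hv, hB])
      y (by simp [hy, hvy.symm]) w (by simp [hw, hvw.symm])
    simpa only [sum_insert hv, add_assoc] using h
  apply add_right_cancel (b := Ky + Kw)
  calc c s(x, y) + c s(z, w) + (Ky + Kw) = (c s(x, y) + Ky) + (c s(z, w) + Kw) := by abel
    _ = (c s(x, w) + Kw) + (c s(z, y) + Ky) := by
      rw [insert_eq x hx hxy hxw, insert_eq z hz hzy hzw]
    _ = c s(x, w) + c s(z, y) + (Ky + Kw) := by abel

theorem exists_add_swap [DecidableEq X] (hg : NoGadget c p e) (he : 0 < e) {S : Finset X}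
    (hS : e + 3 ≤ S.card) {x y : X} (hxy : x ≠ y) :
    ∃ z ∈ S, ∃ w ∈ S, z ≠ w ∧ z ≠ y ∧ x ≠ w ∧
      c s(x, y) + c s(z, w) = c s(x, w) + c s(z, y) := by
  have hpair : 1 < (S \ {x, y}).card := by
    have := le_card_sdiff {x, y} S
    have := card_le_two (a := x) (b := y)
    omega
  obtain ⟨z, hz, w, hw, hzw⟩ := one_lt_card.1 hpair
  have hfour : e - 1 ≤ (S \ {x, y, z, w}).card := by
    have := le_card_sdiff {x, y, z, w} S
    have := card_le_four (a := x) (b := y) (c := z) (d := w)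
    omega
  obtain ⟨B, hBS, hB⟩ := exists_subset_card_eq hfour
  have hnotB : ∀ v ∈ ({x, y, z, w} : Finset X), v ∉ B := fun v hv hvB =>
    (mem_sdiff.1 (hBS hvB)).2 hv
  simp only [mem_sdiff, mem_insert, mem_singleton, not_or] at hz hw
  refine ⟨z, hz.1, w, hw.1, hzw, hz.2.2, Ne.symm hw.2.1, ?_⟩
  exact hg.add_swap (by omega) (hnotB x (by simp)) (hnotB y (by simp)) (hnotB z (by simp))
    (hnotB w (by simp)) hxy (Ne.symm hw.2.1) hz.2.2 hzw

end NoGadget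

theorem stmt_6_general (d d' Δ : ℕ) (hd : 0 < d)
    (hΔ : 2 ≤ Δ) (hdΔ : d ≤ Δ)
    (Γ₀ : Type*) [AddCommGroup Γ₀] [DecidableEq Γ₀]
    (H' : AddSubgroup Γ₀)
    (X : Type*) [Fintype X]
    (c : Sym2 X → Γ₀ ⧸ H')
    (𝒞 : X → Γ₀)
    -- nonempty colour classes have at least 2Δ² elements
    (hclass : ∀ t : Γ₀, (∃ x, 𝒞 x = t) →
      2 * Δ ^ 2 ≤ (Finset.univ.filter (fun x => 𝒞 x = t)).card)
    (Cs : X → Γ₀)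
    (st : Γ₀ → Γ₀)
    -- X has no (d, 2)-gadget and no (d', 2)-gadget
    (hgad : ∀ e : ℕ, e = d ∨ e = d' → ∀ A : Finset X, A.card = e →
      ∀ w ∉ A, ∀ w' ∉ A,
        (∑ u ∈ A, c s(u, w)) + QuotientAddGroup.mk (e • 𝒞 w)
          = (∑ u ∈ A, c s(u, w')) + QuotientAddGroup.mk (e • 𝒞 w'))
    -- the cross-class constants s_{a,b}
    (sab : Γ₀ → Γ₀ → Γ₀)
    (hsaa : ∀ a : Γ₀, (∃ x, 𝒞 x = a) → sab a a = st a)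
    (hsab : ∀ a b : Γ₀, ∀ a₁ b₁ : X, 𝒞 a₁ = a → 𝒞 b₁ = b → a₁ ≠ b₁ →
      c s(a₁, b₁) = QuotientAddGroup.mk (sab a b + Cs a₁ + Cs b₁))
    (r : Γ₀) (hr : ∃ x, 𝒞 x = r) :
    ∀ sh : Γ₀, ∀ a b : Γ₀, (∃ x, 𝒞 x = a) → (∃ x, 𝒞 x = b) →
      ∀ x y : X, 𝒞 x = a → 𝒞 y = b → x ≠ y →
        c s(x, y) + QuotientAddGroup.mk (sh + 𝒞 x + 𝒞 y)
          = QuotientAddGroup.mk (sh + st r + 2 • r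
              + (a + Cs x + sab r a - st r - r)
              + (b + Cs y + sab r b - st r - r)) := by
  classical
  intro sh a b _ _ x y hx hy hxy
  obtain ⟨z, hz, w, hw, hzw, hzy, hxw, hswap⟩ :=
    NoGadget.exists_add_swap (hgad d (Or.inl rfl)) hd
      ((by nlinarith : d + 3 ≤ 2 * Δ ^ 2).trans (hclass r hr)) hxy
  simp only [mem_filter, mem_univ, true_and] at hz hw
  rw [hsab a b x y hx hy hxy, hsab r r z w hz hw hzw, Sym2.eq_swap (a := x),
    hsab r a w x hw hx hxw.symm, hsab r b z y hz hy hzy, hsaa r hr] at hswap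
  rw [hsab a b x y hx hy hxy, hx, hy]
  simp only [QuotientAddGroup.mk_add, QuotientAddGroup.mk_sub, QuotientAddGroup.mk_nsmul]
    at hswap ⊢
  linear_combination (norm := abel) hswap

/-- In the Phase-2 setup, with `t'_{a,i} = a + i + s_{r,a} − s_r − r`, for any
`s ∈ Γ₀`, any `a, b` in the image of `𝒞` and any distinct `x ∈ 𝒞_a`, `y ∈ 𝒞_b`,
we have `c({x,y}) + (s + 𝒞(x) + 𝒞(y) + H') = s + s_r + 2r + t'_{a,𝒞*(x)} +
t'_{b,𝒞*(y)} + H'` in `Γ₀/H'`. -/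
theorem stmt_6 (n d d' Δ : ℕ) (hn : 0 < n) (hd : 0 < d) (hd' : 0 < d')
    (hΔ : 2 ≤ Δ) (hdΔ : d ≤ Δ) (hd'Δ : d' ≤ Δ)
    (κ : ℕ) (hκ : κ = Nat.gcd d (Nat.gcd d' n))
    (Γ₀ : Type*) [AddCommGroup Γ₀] [Fintype Γ₀] [DecidableEq Γ₀]
    (hΓ₀ : Fintype.card Γ₀ = n)
    (Γ H' : AddSubgroup Γ₀) (hH'Γ : H' ≤ Γ)
    (X : Type*) [Fintype X] [DecidableEq X]
    (c : Sym2 X → Γ₀ ⧸ H')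
    -- pair colours lie in the image of Γ in Γ₀/H'
    (hcΓ : ∀ x y : X, x ≠ y → ∃ g ∈ Γ, c s(x, y) = QuotientAddGroup.mk g)
    (𝒞 : X → Γ₀)
    -- nonempty colour classes have at least 2Δ² elements
    (hclass : ∀ t : Γ₀, (∃ x, 𝒞 x = t) →
      2 * Δ ^ 2 ≤ (Finset.univ.filter (fun x => 𝒞 x = t)).card)
    (Cs : X → Γ₀) (hCsΓ : ∀ x, Cs x ∈ Γ) (hCsH : ∀ x, κ • Cs x ∈ H')
    (st : Γ₀ → Γ₀) (hstΓ : ∀ t : Γ₀, (∃ x, 𝒞 x = t) → st t ∈ Γ)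
    (hst : ∀ t : Γ₀, ∀ x y : X, x ≠ y → 𝒞 x = t → 𝒞 y = t →
      c s(x, y) = QuotientAddGroup.mk (st t + Cs x + Cs y))
    -- X has no (d, 2)-gadget and no (d', 2)-gadget
    (hgad : ∀ e : ℕ, e = d ∨ e = d' → ∀ A : Finset X, A.card = e →
      ∀ w ∉ A, ∀ w' ∉ A,
        (∑ u ∈ A, c s(u, w)) + QuotientAddGroup.mk (e • 𝒞 w)
          = (∑ u ∈ A, c s(u, w')) + QuotientAddGroup.mk (e • 𝒞 w'))
    -- the cross-class constants s_{a,b}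
    (sab : Γ₀ → Γ₀ → Γ₀)
    (hsabΓ : ∀ a b : Γ₀, (∃ x, 𝒞 x = a) → (∃ x, 𝒞 x = b) → sab a b ∈ Γ)
    (hsaa : ∀ a : Γ₀, (∃ x, 𝒞 x = a) → sab a a = st a)
    (hsab : ∀ a b : Γ₀, ∀ a₁ b₁ : X, 𝒞 a₁ = a → 𝒞 b₁ = b → a₁ ≠ b₁ →
      c s(a₁, b₁) = QuotientAddGroup.mk (sab a b + Cs a₁ + Cs b₁))
    (r : Γ₀) (hr : ∃ x, 𝒞 x = r) :
    ∀ sh : Γ₀, ∀ a b : Γ₀, (∃ x, 𝒞 x = a) → (∃ x, 𝒞 x = b) →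
      ∀ x y : X, 𝒞 x = a → 𝒞 y = b → x ≠ y →
        c s(x, y) + QuotientAddGroup.mk (sh + 𝒞 x + 𝒞 y)
          = QuotientAddGroup.mk (sh + st r + 2 • r
              + (a + Cs x + sab r a - st r - r)
              + (b + Cs y + sab r b - st r - r)) :=
  stmt_6_general d d' Δ hd hΔ hdΔ Γ₀ H' X c 𝒞 hclass Cs st hgad sab hsaa hsab r hr
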